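/- Let X be a countably compact, countably tight Hausdorff semitopological semilattice and L ⊆ X a chain order-isomorphic to (ω₁, min). Then the closure of L is topologically isomorphic to ω₁ with its order topology and the minimum operation, and L is cofinal in its closure. -/

import Mathlib

/-- A space is countably compact if every infinite subset has an accumulation point. -/
def CountablyCompactSp (S : Type*) [TopologicalSpace S] : Prop :=
  ∀ A : Set S, A.Infinite → ∃ x : S, x ∈ closure (A \ {x})

/-- A space is countably tight if every point of the closure of a set lies in the closure of
a countable subset. -/
def CountablyTight (X : Type*) [TopologicalSpace X] : Prop :=
  ∀ (A : Set X) (x : X), x ∈ closure A → ∃ B ⊆ A, B.Countable ∧ x ∈ closure B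

/-
Translations being continuous, every `Iic a` and `Ici a` is closed, so the closure of a chain
is a chain and order bounds pass to closures. By countable tightness each point of `closure L`
lies below a countable subset of `L`, hence below a point of `L`. A point of `closure L \ L` is
the supremum of the points of `L` below it and is determined by the least point of `L` above it,
so `closure L` is again an uncountable well-ordered chain with countable initial segments, i.e. of
type `ω₁`. Countable compactness gives every increasing sequence a cluster point, which is both
its supremum and its limit; this makes the order isomorphism `ω₁ → closure L` continuous at
limit ordinals, while its inverse is continuous because the order intervals of `closure L` are
open.
-/

universe u

open Set Filter Topology

section SemitopologicalSemilattice

variable {X : Type*} [SemilatticeInf X] [TopologicalSpace X] [T2Space X]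

lemma closedIicTopology_of_continuous_inf (hcont : ∀ s : X, Continuous fun x => s ⊓ x) :
    ClosedIicTopology X where
  isClosed_Iic a := by
    simpa only [Iic, ← inf_eq_right] using isClosed_eq (hcont a) continuous_id'

lemma closedIciTopology_of_continuous_inf (hcont : ∀ s : X, Continuous fun x => s ⊓ x) :
    ClosedIciTopology X where
  isClosed_Ici a := by
    simpa only [Ici, ← inf_eq_left] using isClosed_eq (hcont a) continuous_const

end SemitopologicalSemilattice

instance Subtype.closedIicTopology {X : Type*} [Preorder X] [TopologicalSpace X]
    [ClosedIicTopology X] (s : Set X) : ClosedIicTopology s :=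
  ⟨fun a => (isClosed_Iic (a := a.1)).preimage continuous_subtype_val⟩

instance Subtype.closedIciTopology {X : Type*} [Preorder X] [TopologicalSpace X]
    [ClosedIciTopology X] (s : Set X) : ClosedIciTopology s :=
  ⟨fun a => (isClosed_Ici (a := a.1)).preimage continuous_subtype_val⟩

lemma IsLUB.of_subset_of_forall_exists_le {α : Type*} [Preorder α] {s t : Set α} {a : α}
    (h : IsLUB t a) (hst : s ⊆ t) (hcof : ∀ y ∈ t, ∃ z ∈ s, y ≤ z) : IsLUB s a := by
  refine (isLUB_congr (subset_antisymm ?_ (upperBounds_mono_set hst))).2 h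
  intro u hu y hy
  obtain ⟨z, hz, hyz⟩ := hcof y hy
  exact hyz.trans (hu hz)

lemma exists_strictMono_cofinal_Iio {α : Type*} [LinearOrder α] {a : α}
    (ha : (Iio a).Countable) (hne : (Iio a).Nonempty) {B : Set α}
    (hB : ∀ b < a, ∃ c ∈ B, b < c ∧ c < a) :
    ∃ v : ℕ → α, StrictMono v ∧ (∀ n, v n ∈ B ∧ v n < a) ∧
      ∀ b < a, ∃ n, b < v n := by
  obtain ⟨e, he⟩ := ha.exists_eq_range hne
  have he_lt (n : ℕ) : e n < a := (he ▸ mem_range_self n : e n ∈ Iio a)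
  have hnext (b : α) : ∃ c, b < a → c ∈ B ∧ b < c ∧ c < a := by
    by_cases hb : b < a
    · obtain ⟨c, hc⟩ := hB b hb
      exact ⟨c, fun _ => hc⟩
    · exact ⟨b, fun h => absurd h hb⟩
  choose next hnext using hnext
  let v : ℕ → α := fun n => Nat.rec (next (e 0)) (fun n w => next (max w (e (n + 1)))) n
  have hv (n : ℕ) : v n ∈ B ∧ e n < v n ∧ v n < a := by
    induction n with
    | zero => exact hnext _ (he_lt 0)
    | succ n ih =>
      obtain ⟨hcB, hlt, hca⟩ := hnext _ (max_lt ih.2.2 (he_lt (n + 1)))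
      exact ⟨hcB, (le_max_right _ _).trans_lt hlt, hca⟩
  refine ⟨v, strictMono_nat_of_lt_succ fun n => ?_, fun n => ⟨(hv n).1, (hv n).2.2⟩,
    fun b hb => ?_⟩
  · exact (le_max_left _ _).trans_lt (hnext _ (max_lt (hv n).2.2 (he_lt (n + 1)))).2.1
  · obtain ⟨n, rfl⟩ : b ∈ range e := he ▸ hb
    exact ⟨n, (hv n).2.1⟩

section CountablyCompact

lemma CountablyCompactSp.exists_mapClusterPt {S : Type*} [TopologicalSpace S] [T1Space S]
    (hcc : CountablyCompactSp S) {x : ℕ → S} (hx : Function.Injective x) :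
    ∃ q, MapClusterPt q atTop x := by
  obtain ⟨q, hq⟩ := hcc _ (infinite_range_of_injective hx)
  refine ⟨q, mapClusterPt_atTop_iff_forall_mem_closure.2 fun N => ?_⟩
  -- the finitely many terms before `N` form a closed set, so they can be removed
  have hsplit : range x \ {q} ⊆ (x '' Iio N \ {q}) ∪ x '' Ici N := by
    rintro _ ⟨⟨n, rfl⟩, hne⟩
    rcases lt_or_ge n N with h | h
    exacts [Or.inl ⟨⟨n, h, rfl⟩, hne⟩, Or.inr ⟨n, h, rfl⟩]
  have hfin : IsClosed (x '' Iio N \ {q}) := (((finite_Iio N).image x).sdiff).isClosed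
  have := closure_mono hsplit hq
  rw [closure_union, hfin.closure_eq] at this
  exact this.resolve_left fun h => h.2 rfl

variable {X : Type*} [PartialOrder X] [TopologicalSpace X] [ClosedIicTopology X]
  [ClosedIciTopology X]

lemma isLUB_range_of_mapClusterPt {x : ℕ → X} (hx : Monotone x) {q : X}
    (hq : MapClusterPt q atTop x) : IsLUB (range x) q := by
  rw [mapClusterPt_atTop_iff_forall_mem_closure] at hq
  refine ⟨?_, fun u hu => ?_⟩
  · rintro _ ⟨n, rfl⟩
    exact closure_minimal (image_subset_iff.2 fun m hm => hx hm) isClosed_Ici (hq n)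
  · exact closure_minimal hu isClosed_Iic (closure_mono (image_subset_range x _) (hq 0))

variable [T1Space X]

lemma CountablyCompactSp.tendsto_atTop_of_isLUB (hcc : CountablyCompactSp X) {x : ℕ → X}
    (hx : StrictMono x) {p : X} (hp : IsLUB (range x) p) : Tendsto x atTop (𝓝 p) := by
  by_contra h
  obtain ⟨U, hU, hfreq⟩ := not_tendsto_iff_exists_frequently_notMem.1 h
  obtain ⟨φ, hφ, hφU⟩ := extraction_of_frequently_atTop hfreq
  obtain ⟨q, hq⟩ := hcc.exists_mapClusterPt (hx.comp hφ).injective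
  have hp' : IsLUB (range (x ∘ φ)) p := hp.of_subset_of_forall_exists_le
    (range_comp_subset_range φ x) (by
      rintro _ ⟨n, rfl⟩
      exact ⟨x (φ n), mem_range_self n, hx.monotone (hφ.id_le n)⟩)
  have hqp : q = p := (isLUB_range_of_mapClusterPt (hx.comp hφ).monotone hq).unique hp'
  obtain ⟨n, hn⟩ := (hq.frequently (hqp ▸ hU)).exists
  exact hφU n hn

end CountablyCompact

lemma OrderIso.continuous_of_closedIicTopology {X α : Type*} [PartialOrder X] [TopologicalSpace X]
    [ClosedIicTopology X] [ClosedIciTopology X] [LinearOrder α] [TopologicalSpace α]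
    [OrderTopology α] (e : X ≃o α) : Continuous e := by
  refine OrderTopology.continuous_iff.2 fun b => ⟨?_, ?_⟩
  · have : e ⁻¹' Ioi b = (Iic (e.symm b))ᶜ := by
      ext y
      simp only [mem_preimage, mem_Ioi, mem_compl_iff, mem_Iic, OrderIso.le_symm_apply, not_le]
    rw [this]
    exact isClosed_Iic.isOpen_compl
  · have : e ⁻¹' Iio b = (Ici (e.symm b))ᶜ := by
      ext y
      simp only [mem_preimage, mem_Iio, mem_compl_iff, mem_Ici, OrderIso.symm_apply_le, not_le]
    rw [this]
    exact isClosed_Ici.isOpen_compl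

section WellOrderedDomain

variable {α : Type*} [LinearOrder α]
  {X : Type*} [PartialOrder X] [TopologicalSpace X] [ClosedIicTopology X] [ClosedIciTopology X]
  [T1Space X]

lemma CountablyCompactSp.isLUB_image_Iio (hcc : CountablyCompactSp X) {s : Set X}
    (hs : IsClosed s) (e : α ≃o s) {a : α} (ha : (Iio a).Countable)
    (hlim : Order.IsSuccLimit a) : IsLUB ((fun c => (e c : X)) '' Iio a) (e a) := by
  obtain ⟨v, hv, hva, hvcof⟩ := exists_strictMono_cofinal_Iio ha
    (not_isMin_iff.1 hlim.not_isMin) (B := Iio a) fun b hb => by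
      obtain ⟨c, hbc, hca⟩ := (not_covBy_iff hb).1 (hlim.isSuccPrelimit b)
      exact ⟨c, hca, hbc, hca⟩
  set x : ℕ → X := fun n => e (v n)
  have hx : StrictMono x := fun m n h => e.strictMono (hv h)
  obtain ⟨q, hq⟩ := hcc.exists_mapClusterPt hx.injective
  have hqlub := isLUB_range_of_mapClusterPt hx.monotone hq
  have hqs : q ∈ s := hs.closure_subset_iff.2 (range_subset_iff.2 fun n => (e (v n)).2)
    (closure_mono (image_subset_range x _) (mapClusterPt_atTop_iff_forall_mem_closure.1 hq 0))
  -- `s` being closed, `q` is a value of `e`, taken at or above `a` since the `v n` exhaust `Iio a`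
  set δ := e.symm ⟨q, hqs⟩
  have hδ : (e δ : X) = q := by simp [δ]
  have haδ : a ≤ δ := not_lt.1 fun hδa => by
    obtain ⟨n, hn⟩ := hvcof δ hδa
    exact (hqlub.1 (mem_range_self n)).not_gt (hδ ▸ e.strictMono hn)
  refine ⟨?_, fun u hu => ?_⟩
  · rintro _ ⟨c, hc, rfl⟩
    exact e.monotone hc.le
  calc (e a : X) ≤ e δ := e.monotone haδ
    _ = q := hδ
    _ ≤ u := hqlub.2 (by rintro _ ⟨n, rfl⟩; exact hu ⟨v n, (hva n).2, rfl⟩)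

variable [TopologicalSpace α] [OrderTopology α]

lemma CountablyCompactSp.continuousWithinAt_Iio (hcc : CountablyCompactSp X) {g : α → X}
    (hg : StrictMono g) {a : α} (ha : (Iio a).Countable) (hlim : Order.IsSuccLimit a)
    (hlub : IsLUB (g '' Iio a) (g a)) : ContinuousWithinAt g (Iio a) a := by
  by_contra h
  obtain ⟨U, hU, hfreq⟩ := not_tendsto_iff_exists_frequently_notMem.1 h
  have hne : (Iio a).Nonempty := not_isMin_iff.1 hlim.not_isMin
  obtain ⟨v, hv, hvB, hvcof⟩ := exists_strictMono_cofinal_Iio ha hne (B := {c | g c ∉ U})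
    fun b hb => by
      obtain ⟨c, ⟨hbc, hca⟩, hc⟩ :=
        (nhdsLT_basis_of_exists_lt hne).frequently_iff.1 hfreq b hb
      exact ⟨c, hc, hbc, hca⟩
  have hlub' : IsLUB (range (g ∘ v)) (g a) := hlub.of_subset_of_forall_exists_le
    (by rintro _ ⟨n, rfl⟩; exact mem_image_of_mem g (hvB n).2) (by
      rintro _ ⟨c, hc, rfl⟩
      obtain ⟨n, hn⟩ := hvcof c hc
      exact ⟨g (v n), mem_range_self n, hg.monotone hn.le⟩)
  obtain ⟨n, hn⟩ := ((hcc.tendsto_atTop_of_isLUB (hg.comp hv) hlub').eventually hU).exists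
  exact (hvB n).1 hn

variable [WellFoundedLT α]

lemma CountablyCompactSp.continuous_of_strictMono (hcc : CountablyCompactSp X)
    (hIio : ∀ a : α, (Iio a).Countable) {g : α → X} (hg : StrictMono g)
    (hlub : ∀ a, Order.IsSuccLimit a → IsLUB (g '' Iio a) (g a)) : Continuous g := by
  refine continuous_iff_continuousAt.2 fun a =>
    continuousAt_iff_continuous_left'_right'.2 ⟨?_, ?_⟩
  · by_cases hlim : Order.IsSuccLimit a
    · exact hcc.continuousWithinAt_Iio hg (hIio a) hlim (hlub a hlim)
    · have : 𝓝[<] a = ⊥ := nhdsLT_eq_bot_iff.2 <| (Order.not_isSuccLimit_iff.1 hlim).imp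
        isBot_iff_isMin.2 Order.not_isSuccPrelimit_iff.1
      simp [ContinuousWithinAt, this]
  · have : 𝓝[>] a = ⊥ := nhdsGT_eq_bot_iff.2 <| (em (IsMax a)).imp isTop_iff_isMax.2
      fun h => exists_covBy_of_wellFoundedLT h
    simp [ContinuousWithinAt, this]

end WellOrderedDomain

lemma IsChain.closure {X : Type*} [PartialOrder X] [TopologicalSpace X] [ClosedIicTopology X]
    [ClosedIciTopology X] {s : Set X} (hs : IsChain (· ≤ ·) s) :
    IsChain (· ≤ ·) (closure s) := by
  have hcmp (a : X) (h : s ⊆ Ici a ∪ Iic a) : _root_.closure s ⊆ Ici a ∪ Iic a :=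
    closure_minimal h (isClosed_Ici.union isClosed_Iic)
  have hmem (a : X) (ha : a ∈ s) : _root_.closure s ⊆ Ici a ∪ Iic a :=
    hcmp a fun b hb => hs.total ha hb
  exact fun y hy z hz _ => hcmp y (fun b hb => (hmem b hb hy).symm) hz

lemma not_countable_Iio_ord_aleph_one : ¬ Countable (Iio (Cardinal.aleph.{u} 1).ord) := by
  rw [← Cardinal.mk_le_aleph0_iff, Cardinal.mk_Iio_ordinal, Cardinal.card_ord,
    Cardinal.lift_le_aleph0]
  exact Cardinal.aleph0_lt_aleph_one.not_ge

lemma countable_Iio_of_mem_Iio_ord_aleph_one (a : Iio (Cardinal.aleph.{u} 1).ord) :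
    (Iio a).Countable := by
  have h : (Iio (a : Ordinal)).Countable := by
    rw [← Cardinal.le_aleph0_iff_set_countable, Cardinal.mk_Iio_ordinal, Cardinal.lift_le_aleph0,
      ← Cardinal.lt_aleph_one_iff]
    exact Cardinal.lt_ord.1 a.2
  exact h.preimage Subtype.val_injective

/-- An uncountable well-ordered chain all of whose initial segments are countable: an intrinsic
description of the chains of order type `ω₁` (see `nonempty_orderIso_Iio_ord_aleph_one`). -/
structure IsOmegaOneChain {α : Type*} [Preorder α] (s : Set α) : Prop where
  isChain : IsChain (· ≤ ·) s
  isWF : s.IsWF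
  not_countable : ¬ s.Countable
  countable_inter_Iic : ∀ x ∈ s, (s ∩ Iic x).Countable

namespace IsOmegaOneChain

section Order

variable {α β : Type*} [PartialOrder α] [PartialOrder β] {s : Set α} {t : Set β}

lemma of_orderIso {γ : Type*} [LinearOrder γ] [WellFoundedLT γ] (hγ : ¬ Countable γ)
    (hIio : ∀ c : γ, (Iio c).Countable) (e : γ ≃o s) : IsOmegaOneChain s where
  isChain x hx y hy _ :=
    (le_total (e.symm ⟨x, hx⟩) (e.symm ⟨y, hy⟩)).imp e.symm.le_iff_le.1 e.symm.le_iff_le.1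
  isWF := e.symm.strictMono.wellFoundedLT.wf
  not_countable h := hγ (@Function.Injective.countable _ _ h.to_subtype _ e.injective)
  countable_inter_Iic x hx := by
    set a := e.symm ⟨x, hx⟩
    have ha : (Iic a).Countable := Iio_insert (a := a) ▸ (hIio a).insert a
    refine (ha.image fun b => (e b : α)).mono ?_
    rintro y ⟨hy, hyx⟩
    refine ⟨e.symm ⟨y, hy⟩, ?_, by simp⟩
    exact e.symm.monotone (show (⟨y, hy⟩ : s) ≤ ⟨x, hx⟩ from hyx)

lemma exists_isLeast (hs : IsOmegaOneChain s) {B : Set α} (hBs : B ⊆ s) (hB : B.Nonempty) :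
    ∃ m, IsLeast B m := by
  have hwf := hs.isWF.mono hBs
  refine ⟨hwf.min hB, hwf.min_mem hB, fun x hx => ?_⟩
  rcases hs.isChain.total (hBs hx) (hBs (hwf.min_mem hB)) with h | h
  · exact (eq_of_le_of_not_lt h (hwf.not_lt_min hB hx)).ge
  · exact h

lemma exists_forall_le_of_countable (hs : IsOmegaOneChain s) {B : Set α} (hBs : B ⊆ s)
    (hB : B.Countable) : ∃ l ∈ s, ∀ b ∈ B, b ≤ l := by
  have hU : (⋃ b ∈ B, s ∩ Iic b).Countable :=
    hB.biUnion fun b hb => hs.countable_inter_Iic b (hBs hb)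
  obtain ⟨l, hl, hlU⟩ : (s \ ⋃ b ∈ B, s ∩ Iic b).Nonempty :=
    sdiff_nonempty.2 fun h => hs.not_countable (hU.mono h)
  exact ⟨l, hl, fun b hb =>
    (hs.isChain.total (hBs hb) hl).resolve_right fun h => hlU (mem_biUnion hb ⟨hl, h⟩)⟩

lemma isWellOrder (hs : IsOmegaOneChain s) : IsWellOrder s (· < ·) where
  wf := hs.isWF
  trichotomous x y hxy hyx := by
    rcases hs.isChain.total x.2 y.2 with h | h
    exacts [Subtype.ext (eq_of_le_of_not_lt h hxy), Subtype.ext (eq_of_le_of_not_lt h hyx).symm]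

lemma isEmpty_principalSeg (hs : IsOmegaOneChain s) (ht : IsOmegaOneChain t) :
    IsEmpty (s <i t) := by
  refine ⟨fun g => hs.not_countable ?_⟩
  have : Countable ↥(t ∩ Iic (g.top : β)) := (ht.countable_inter_Iic _ g.top.2).to_subtype
  refine countable_coe_iff.1 <| Function.Injective.countable
    (f := fun x : s => (⟨g x, (g x).2, (g.lt_top x).le⟩ : ↥(t ∩ Iic (g.top : β))))
    fun x y hxy => g.injective (Subtype.ext (Subtype.mk.inj hxy))

lemma nonempty_orderIso (hs : IsOmegaOneChain s) (ht : IsOmegaOneChain t) :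
    Nonempty (s ≃o t) := by
  have := hs.isWellOrder
  have := ht.isWellOrder
  have := hs.isEmpty_principalSeg ht
  have := ht.isEmpty_principalSeg hs
  rcases InitialSeg.total ((· < ·) : s → s → Prop) ((· < ·) : t → t → Prop) with f | f
  · rcases f.principalSumRelIso with g | e
    exacts [isEmptyElim g, ⟨OrderIso.ofRelIsoLT e⟩]
  · rcases f.principalSumRelIso with g | e
    exacts [isEmptyElim g, ⟨(OrderIso.ofRelIsoLT e).symm⟩]

lemma nonempty_orderIso_Iio_ord_aleph_one (hs : IsOmegaOneChain s) :
    Nonempty (Iio (Cardinal.aleph.{u} 1).ord ≃o s) := by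
  obtain ⟨e⟩ := (of_orderIso not_countable_Iio_ord_aleph_one
    countable_Iio_of_mem_Iio_ord_aleph_one OrderIso.Set.univ.symm).nonempty_orderIso hs
  exact ⟨OrderIso.Set.univ.symm.trans e⟩

end Order

variable {X : Type*} [PartialOrder X] [TopologicalSpace X] [ClosedIicTopology X] {s : Set X}
  {y z : X}

lemma exists_ge_of_mem_closure (hs : IsOmegaOneChain s) (htight : CountablyTight X)
    (hy : y ∈ closure s) : ∃ l ∈ s, y ≤ l := by
  obtain ⟨B, hBs, hB, hyB⟩ := htight s y hy
  obtain ⟨l, hl, hBl⟩ := hs.exists_forall_le_of_countable hBs hB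
  exact ⟨l, hl, closure_minimal hBl isClosed_Iic hyB⟩

variable [ClosedIciTopology X]

lemma isLUB_inter_Iio (hs : IsOmegaOneChain s) (hy : y ∈ closure s) (hys : y ∉ s) :
    IsLUB (s ∩ Iio y) y := by
  have hsplit : s ⊆ (s ∩ Iio y) ∪ (s ∩ Ioi y) := fun l hl =>
    (hs.isChain.closure.total (subset_closure hl) hy).elim
      (fun h => Or.inl ⟨hl, h.lt_of_ne fun e => hys (e ▸ hl)⟩)
      fun h => Or.inr ⟨hl, h.lt_of_ne fun e => hys (e ▸ hl)⟩
  have hy' : y ∈ closure (s ∩ Iio y) := by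
    have := closure_mono hsplit hy
    rw [closure_union] at this
    refine this.resolve_right fun h => ?_
    -- the least point of `s` above `y` would be a closed barrier between `y` and `s ∩ Ioi y`
    obtain ⟨m, hm, hmin⟩ :=
      hs.exists_isLeast inter_subset_left (closure_nonempty_iff.1 ⟨y, h⟩)
    exact hm.2.not_ge (closure_minimal hmin isClosed_Ici h)
  exact ⟨fun l hl => hl.2.le, fun u hu => closure_minimal hu isClosed_Iic hy'⟩

lemma exists_mem_Icc_of_lt (hs : IsOmegaOneChain s) (hy : y ∈ closure s) (hz : z ∈ closure s)
    (hyz : y < z) : ∃ l ∈ s, y ≤ l ∧ l ≤ z := by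
  by_cases hzs : z ∈ s
  · exact ⟨z, hzs, hyz.le, le_rfl⟩
  by_contra! h
  refine hyz.not_ge ((hs.isLUB_inter_Iio hz hzs).2 fun l ⟨hl, hlz⟩ => ?_)
  exact (hs.isChain.closure.total (subset_closure hl) hy).resolve_right
    fun hyl => h l hl hyl hlz.le

lemma isWF_closure (hs : IsOmegaOneChain s) : (closure s).IsWF := by
  refine isWF_iff_no_descending_seq.2 fun y hy hys => ?_
  choose l hl hyl hly using fun n =>
    hs.exists_mem_Icc_of_lt (hys (n + 1)) (hys n) (hy n.lt_succ_self)
  -- a point of `s` sits between any two consecutive terms, so every other one descends strictly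
  refine isWF_iff_no_descending_seq.1 hs.isWF (fun n => l (2 * n))
    (strictAnti_nat_of_succ_lt fun n => ?_) fun n => hl _
  exact (hly _).trans_lt ((hy (show 2 * n + 1 < 2 * (n + 1) by omega)).trans_le (hyl _))

lemma countable_closure_inter_Iic (hs : IsOmegaOneChain s) (htight : CountablyTight X)
    (hz : z ∈ closure s) : (closure s ∩ Iic z).Countable := by
  obtain ⟨l₀, hl₀, hzl₀⟩ := hs.exists_ge_of_mem_closure htight hz
  set F : X → Set X := fun l => {y | y ∈ closure s \ s ∧ IsLeast (s ∩ Ici y) l}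
  -- a point of `closure s \ s` is determined by the least point of `s` above it
  have hF (l : X) : (F l).Subsingleton := by
    have hnlt : ∀ y ∈ F l, ∀ y' ∈ F l, ¬ y < y' := by
      rintro y ⟨⟨hy, -⟩, hyl⟩ y' ⟨⟨hy', hy's⟩, hy'l⟩ hlt
      obtain ⟨m, hm, hym, hmy'⟩ := hs.exists_mem_Icc_of_lt hy hy' hlt
      exact hy's ((le_antisymm hmy' ((hy'l.1.2).trans (hyl.2 ⟨hm, hym⟩))) ▸ hm)
    intro y hy y' hy'
    rcases hs.isChain.closure.total hy.1.1 hy'.1.1 with h | h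
    exacts [eq_of_le_of_not_lt h (hnlt y hy y' hy'), (eq_of_le_of_not_lt h (hnlt y' hy' y hy)).symm]
  have hcover : closure s ∩ Iic z ⊆ (s ∩ Iic l₀) ∪ ⋃ l ∈ s ∩ Iic l₀, F l := by
    rintro y ⟨hy, hyz⟩
    by_cases hys : y ∈ s
    · exact Or.inl ⟨hys, hyz.trans hzl₀⟩
    obtain ⟨m, hm⟩ := hs.exists_isLeast inter_subset_left ⟨l₀, hl₀, hyz.trans hzl₀⟩
    have hml₀ : m ≤ l₀ := hm.2 ⟨hl₀, hyz.trans hzl₀⟩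
    exact Or.inr (mem_biUnion ⟨hm.1.1, hml₀⟩ ⟨⟨hy, hys⟩, hm⟩)
  exact ((hs.countable_inter_Iic l₀ hl₀).union
    ((hs.countable_inter_Iic l₀ hl₀).biUnion fun l _ => (hF l).countable)).mono hcover

protected lemma closure (hs : IsOmegaOneChain s) (htight : CountablyTight X) :
    IsOmegaOneChain (closure s) where
  isChain := hs.isChain.closure
  isWF := hs.isWF_closure
  not_countable h := hs.not_countable (h.mono subset_closure)
  countable_inter_Iic _ hz := hs.countable_closure_inter_Iic htight hz

end IsOmegaOneChain

/-- In a countably compact, countably tight Hausdorff semitopological semilattice, the closure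
of a chain `L` order-isomorphic to `(ω₁, min)` is topologically isomorphic to `ω₁` with its
order topology (and the `min` operation), and `L` is cofinal in its closure.  Here `ω₁` with
its order topology is represented by the subspace `Set.Iio ω₁` of the ordinals with their
order topology. -/
theorem closure_omega1_chain_topologically_omega1 {X : Type*} [SemilatticeInf X]
    [TopologicalSpace X] [T2Space X]
    (hcont : ∀ s : X, Continuous fun x => s ⊓ x)
    (hcc : CountablyCompactSp X) (htight : CountablyTight X)
    (L : Set X)
    (hiso : Nonempty ((Set.Iio (Cardinal.aleph 1).ord) ≃o L)) :
    (∃ φ : (Set.Iio (Cardinal.aleph 1).ord) ≃o (closure L),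
      Continuous φ ∧ Continuous φ.symm) ∧
    (∀ y ∈ closure L, ∃ l ∈ L, y ≤ l) := by
  have := closedIicTopology_of_continuous_inf hcont
  have := closedIciTopology_of_continuous_inf hcont
  obtain ⟨f⟩ := hiso
  have hL : IsOmegaOneChain L :=
    .of_orderIso not_countable_Iio_ord_aleph_one countable_Iio_of_mem_Iio_ord_aleph_one f
  obtain ⟨φ⟩ := (hL.closure htight).nonempty_orderIso_Iio_ord_aleph_one
  have hφ : Continuous fun a => (φ a : X) :=
    hcc.continuous_of_strictMono countable_Iio_of_mem_Iio_ord_aleph_one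
      ((Subtype.strictMono_coe _).comp φ.strictMono) fun a ha =>
        hcc.isLUB_image_Iio isClosed_closure φ (countable_Iio_of_mem_Iio_ord_aleph_one a) ha
  exact ⟨⟨φ, continuous_induced_rng.2 hφ, φ.symm.continuous_of_closedIicTopology⟩,
    fun y hy => hL.exists_ge_of_mem_closure htight hy⟩
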